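/- arXiv:2401.05523 — 2 statements merged into one kernel-verified Lean document; each statement's English description precedes it below -/
import Mathlib

section
/- A graph G has the property that every induced subgraph of G is a König-Egerváry graph if and only if G is bipartite. -/
open SimpleGraph

variable {V : Type*}

/-- A set of vertices is independent: no two of its vertices are adjacent. -/
def IsIndep (G : SimpleGraph V) (s : Set V) : Prop :=
  s.Pairwise fun a b => ¬ G.Adj a b

/-- The independence number α(G). -/
noncomputable def alphaNum (G : SimpleGraph V) : ℕ :=
  sSup {n | ∃ s : Set V, IsIndep G s ∧ s.ncard = n}

/-- The matching number μ(G). -/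
noncomputable def muNum (G : SimpleGraph V) : ℕ :=
  sSup {n | ∃ M : SimpleGraph.Subgraph G, M.IsMatching ∧ M.edgeSet.ncard = n}

/-- The neighborhood N(A) of a set of vertices. -/
def nbhd (G : SimpleGraph V) (A : Set V) : Set V := {v | ∃ a ∈ A, G.Adj a v}

/-- The difference d(A) = |A| - |N(A)| of a set of vertices. -/
noncomputable def diffSet (G : SimpleGraph V) (A : Set V) : ℤ :=
  (A.ncard : ℤ) - (nbhd G A).ncard

/-- The critical difference d(G). -/
noncomputable def critDiff (G : SimpleGraph V) : ℤ :=
  sSup {d | ∃ I : Set V, IsIndep G I ∧ diffSet G I = d}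

/-- A critical independent set: an independent set attaining the critical difference. -/
def IsCriticalIndep (G : SimpleGraph V) (A : Set V) : Prop :=
  IsIndep G A ∧ diffSet G A = critDiff G

/-- ker(G): the intersection of all critical independent sets. -/
noncomputable def kerSet (G : SimpleGraph V) : Set V :=
  ⋂₀ {A | IsCriticalIndep G A}

/-- A maximum independent set. -/
noncomputable def IsMaxIndep (G : SimpleGraph V) (S : Set V) : Prop :=
  IsIndep G S ∧ S.ncard = alphaNum G

/-- core(G): the intersection of all maximum independent sets. -/
noncomputable def coreSet (G : SimpleGraph V) : Set V :=
  ⋂₀ {S | IsMaxIndep G S}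

/-- A König–Egerváry graph: α(G) + μ(G) = n(G). -/
def KonigEgervary (G : SimpleGraph V) : Prop :=
  alphaNum G + muNum G = Nat.card V

/-!
If `G` is bipartite with colour classes `A` and `B`, so is every induced subgraph, and König's
theorem in deficiency form gives `α + μ = n`: choose `S ⊆ A` maximising `d = |S| - |N(S)|`; then
`S ∪ (B \ N(S))` is an independent set of size `|B| + d`, and Hall's theorem (after adding `d`
dummy vertices to `B`) matches all but `d` vertices of `A`.

Conversely, `α + μ ≤ n` in every graph, while on the vertex set of an odd cycle `C_{2k+1}` both
`α` and `μ` are at most `k`. A graph that is not bipartite has a closed walk of odd length, and a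
shortest one visits no vertex twice.
-/

open Finset

theorem Finset.exists_injective_of_card_le_card_biUnion_add {ι β : Type*} [Fintype ι]
    [DecidableEq β] (t : ι → Finset β) (d : ℕ)
    (h : ∀ s : Finset ι, #s ≤ #(s.biUnion t) + d) :
    ∃ T : Finset ι, Fintype.card ι ≤ #T + d ∧
      ∃ f : T → β, f.Injective ∧ ∀ a : T, f a ∈ t a := by
  classical
  -- Hall's theorem, after adding `d` new elements to every `t a`
  let t' : ι → Finset (β ⊕ Fin d) := fun a => (t a).disjSum univ
  have hall : ∀ s : Finset ι, #s ≤ #(s.biUnion t') := by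
    intro s
    obtain rfl | ⟨a₀, ha₀⟩ := s.eq_empty_or_nonempty
    · simp
    calc #s ≤ #(s.biUnion t) + d := h s
      _ = #((s.biUnion t).disjSum (univ : Finset (Fin d))) := by simp
      _ ≤ #(s.biUnion t') := card_le_card fun x hx => by
        simp only [t', mem_disjSum, mem_biUnion, mem_univ, true_and] at hx ⊢
        grind
  obtain ⟨g, hg, hgt⟩ := (all_card_le_biUnion_card_iff_exists_injective t').1 hall
  set T := univ.filter fun a => (g a).isLeft
  have hTc : #Tᶜ ≤ #(univ.map .inr : Finset (β ⊕ Fin d)) := by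
    refine card_le_card_of_injOn g (fun a ha => ?_) hg.injOn
    simp only [T, coe_compl, coe_filter, Set.mem_compl_iff, Set.mem_ofPred_eq, mem_univ,
      true_and, Bool.not_eq_true, Sum.isLeft_eq_false, Sum.isRight_iff] at ha
    obtain ⟨y, hy⟩ := ha
    simp [hy]
  refine ⟨T, ?_, fun a => (g a).getLeft (mem_filter.1 a.2).2, fun a b hab => ?_, fun a => ?_⟩
  · have := card_add_card_compl T
    simp only [card_map, card_univ, Fintype.card_fin] at hTc
    omega
  · refine Subtype.ext (hg ?_)
    rw [← Sum.inl_getLeft (g a) (mem_filter.1 a.2).2,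
      ← Sum.inl_getLeft (g b) (mem_filter.1 b.2).2]
    exact congrArg Sum.inl hab
  · have := hgt a
    rw [← Sum.inl_getLeft (g a) (mem_filter.1 a.2).2] at this
    exact inl_mem_disjSum.1 this

lemma Fin.val_finRotate {n : ℕ} (i : Fin n) :
    (finRotate n i : ℕ) = if (i : ℕ) + 1 = n then 0 else (i : ℕ) + 1 := by
  cases n with
  | zero => exact i.elim0
  | succ n => rw [coe_finRotate]; simp [Fin.ext_iff]

section Attained
variable [Finite V] (G : SimpleGraph V)

lemma bddAbove_isIndep_ncard : BddAbove {n | ∃ s : Set V, IsIndep G s ∧ s.ncard = n} :=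
  ⟨Nat.card V, by rintro _ ⟨s, -, rfl⟩; exact Set.ncard_le_card s⟩

lemma bddAbove_isMatching_ncard :
    BddAbove {n | ∃ M : G.Subgraph, M.IsMatching ∧ M.edgeSet.ncard = n} :=
  ⟨Nat.card (Sym2 V), by rintro _ ⟨M, -, rfl⟩; exact Set.ncard_le_card _⟩

lemma exists_isIndep_ncard_eq_alphaNum : ∃ s : Set V, IsIndep G s ∧ s.ncard = alphaNum G :=
  Nat.sSup_mem ⟨0, by exact ⟨∅, Set.pairwise_empty _, Set.ncard_empty V⟩⟩
    (bddAbove_isIndep_ncard G)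

lemma exists_isMatching_ncard_eq_muNum :
    ∃ M : G.Subgraph, M.IsMatching ∧ M.edgeSet.ncard = muNum G :=
  Nat.sSup_mem ⟨0, by exact ⟨⊥, fun _ hv => hv.elim, by simp⟩⟩
    (bddAbove_isMatching_ncard G)

variable {G}

lemma IsIndep.ncard_le_alphaNum {s : Set V} (hs : IsIndep G s) : s.ncard ≤ alphaNum G :=
  le_csSup (bddAbove_isIndep_ncard G) ⟨s, hs, rfl⟩

lemma SimpleGraph.Subgraph.IsMatching.ncard_edgeSet_le_muNum {M : G.Subgraph}
    (hM : M.IsMatching) : M.edgeSet.ncard ≤ muNum G :=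
  le_csSup (bddAbove_isMatching_ncard G) ⟨M, hM, rfl⟩

end Attained

namespace SimpleGraph

variable {G : SimpleGraph V}

theorem Subgraph.IsMatching.ncard_verts_eq_two_mul [Finite V] {M : G.Subgraph}
    (hM : M.IsMatching) : M.verts.ncard = 2 * M.edgeSet.ncard := by
  classical
  have := Fintype.ofFinite V
  have hcard : Fintype.card M.verts = 2 * #M.coe.edgeFinset := by
    rw [← M.coe.sum_degrees_eq_twice_card_edges, ← card_univ, card_eq_sum_ones]
    refine sum_congr rfl fun v _ => ?_
    rw [coe_degree]
    convert ((isMatching_iff_forall_degree.1 hM) v v.2).symm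
  rw [← Nat.card_coe_set_eq, Nat.card_eq_fintype_card, hcard, ← Set.ncard_coe_finset,
    coe_edgeFinset, ← M.image_coe_edgeSet_coe,
    Set.ncard_image_of_injective _ (Sym2.map.injective Subtype.val_injective)]

lemma two_mul_muNum_le [Finite V] (G : SimpleGraph V) : 2 * muNum G ≤ Nat.card V := by
  obtain ⟨M, hM, hμ⟩ := exists_isMatching_ncard_eq_muNum G
  rw [← hμ, ← hM.ncard_verts_eq_two_mul]
  exact Set.ncard_le_card _

lemma alphaNum_add_muNum_le [Finite V] (G : SimpleGraph V) :
    alphaNum G + muNum G ≤ Nat.card V := by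
  obtain ⟨S, hS, hα⟩ := exists_isIndep_ncard_eq_alphaNum G
  obtain ⟨M, hM, hμ⟩ := exists_isMatching_ncard_eq_muNum G
  have hsurj : Function.Surjective fun v : ↥(M.verts \ S) => hM.toEdge ⟨v, v.2.1⟩ := by
    rintro ⟨e, he⟩
    induction e using Sym2.ind with | h x y => ?_
    have hxy : M.Adj x y := he
    by_cases hx : x ∈ S
    · have hy : y ∉ S := fun hy => hS hx hy (M.adj_sub hxy).ne (M.adj_sub hxy)
      exact ⟨⟨y, hxy.snd_mem, hy⟩,
        (hM.toEdge_eq_toEdge_of_adj hxy).symm.trans (hM.toEdge_eq_of_adj hxy)⟩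
    · exact ⟨⟨x, hxy.fst_mem, hx⟩, hM.toEdge_eq_of_adj hxy⟩
  have hE : M.edgeSet.ncard ≤ (M.verts \ S).ncard := by
    simpa only [Nat.card_coe_set_eq] using Nat.card_le_card_of_surjective _ hsurj
  have hS' : (M.verts \ S).ncard ≤ Sᶜ.ncard := Set.ncard_le_ncard fun v hv => hv.2
  have := Set.ncard_add_ncard_compl S
  omega

lemma le_muNum_of_injective [Finite V] {κ : Type*} {a b : κ → V} (ha : a.Injective)
    (hb : b.Injective) (hab : ∀ i j, a i ≠ b j) (hadj : ∀ i, G.Adj (a i) (b i)) :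
    Nat.card κ ≤ muNum G := by
  let f : Set.range a ≃ Set.range b :=
    (Equiv.ofInjective a ha).symm.trans (Equiv.ofInjective b hb)
  have hf : ∀ v : Set.range a, G.Adj v (f v) := by
    rintro ⟨_, i, rfl⟩
    have : (Equiv.ofInjective a ha).symm ⟨a i, i, rfl⟩ = i :=
      (Equiv.ofInjective a ha).symm_apply_apply i
    simp only [f, Equiv.trans_apply, this, Equiv.ofInjective_apply]
    exact hadj i
  have hdisj : Disjoint (Set.range a) (Set.range b) := Set.disjoint_range_iff.2 hab
  obtain ⟨M, hMv, hM⟩ := Subgraph.IsMatching.exists_of_disjoint_sets_of_equiv hdisj f hf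
  have hcard := hM.ncard_verts_eq_two_mul
  rw [hMv, Set.ncard_union_eq hdisj, Set.ncard_range_of_injective ha,
    Set.ncard_range_of_injective hb] at hcard
  have := hM.ncard_edgeSet_le_muNum
  omega

section Coloring
variable [Fintype V] [DecidableEq V] [DecidableRel G.Adj] (c : G.Coloring Bool) {s : Finset V}

lemma Coloring.biUnion_neighborFinset_subset (hs : ∀ v ∈ s, c v = true) :
    s.biUnion (G.neighborFinset ·) ⊆ univ.filter (c · = false) := fun v hv => by
  obtain ⟨a, ha, hav⟩ := mem_biUnion.1 hv
  have := c.valid ((mem_neighborFinset _ _ _).1 hav)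
  rw [hs a ha] at this
  simpa using this.symm

lemma Coloring.isIndep_union_sdiff_biUnion_neighborFinset (hs : ∀ v ∈ s, c v = true) :
    IsIndep G ↑(s ∪ (univ.filter (c · = false) \ s.biUnion (G.neighborFinset ·))) := by
  have hmem : ∀ v ∈ s ∪ (univ.filter (c · = false) \ s.biUnion (G.neighborFinset ·)),
      (c v = true ∧ ∀ w, G.Adj v w → w ∈ s.biUnion (G.neighborFinset ·)) ∨
        (c v = false ∧ v ∉ s.biUnion (G.neighborFinset ·)) := by
    intro v hv
    rcases mem_union.1 hv with hv | hv
    · refine .inl ⟨hs v hv, fun w hw => ?_⟩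
      exact mem_biUnion.2 ⟨v, hv, (mem_neighborFinset _ _ _).2 hw⟩
    · obtain ⟨hvB, hvN⟩ := mem_sdiff.1 hv
      exact .inr ⟨(mem_filter.1 hvB).2, hvN⟩
  intro x hx y hy _ hxy
  rcases hmem x hx with ⟨hcx, hNx⟩ | ⟨hcx, hx'⟩ <;>
    rcases hmem y hy with ⟨hcy, hNy⟩ | ⟨hcy, hy'⟩
  · exact c.valid hxy (hcx.trans hcy.symm)
  · exact hy' (hNx y hxy)
  · exact hx' (hNy x hxy.symm)
  · exact c.valid hxy (hcx.trans hcy.symm)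

lemma Coloring.card_add_card_sdiff_biUnion_le_alphaNum (hs : ∀ v ∈ s, c v = true) :
    #s + (#(univ.filter (c · = false)) - #(s.biUnion (G.neighborFinset ·))) ≤ alphaNum G := by
  have hN := c.biUnion_neighborFinset_subset hs
  have hdisj : Disjoint s (univ.filter (c · = false) \ s.biUnion (G.neighborFinset ·)) :=
    Finset.disjoint_left.2 fun v hv hv' => by simp [hs v hv] at hv'
  rw [← card_sdiff_of_subset hN, ← card_union_of_disjoint hdisj, ← Set.ncard_coe_finset]
  exact (c.isIndep_union_sdiff_biUnion_neighborFinset hs).ncard_le_alphaNum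

end Coloring

lemma le_alphaNum_add_muNum_of_coloring [Finite V] (c : G.Coloring Bool) :
    Nat.card V ≤ alphaNum G + muNum G := by
  classical
  have := Fintype.ofFinite V
  let A := {v // c v = true}
  let B : Finset V := univ.filter (c · = false)
  let N : Finset A → Finset V := fun s => s.biUnion fun a => G.neighborFinset a
  have hA : ∀ s : Finset A, ∀ v ∈ s.map (.subtype _), c v = true := fun s v hv => by
    obtain ⟨a, -, rfl⟩ := mem_map.1 hv
    exact a.2
  have hN : ∀ s, N s = (s.map (.subtype _)).biUnion (G.neighborFinset ·) := fun s => by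
    rw [map_eq_image, image_biUnion]; rfl
  have hNB : ∀ s, #(N s) ≤ #B := fun s =>
    card_le_card (hN s ▸ c.biUnion_neighborFinset_subset (hA s))
  have hα : ∀ s, #s + (#B - #(N s)) ≤ alphaNum G := fun s => by
    simpa only [hN, card_map] using c.card_add_card_sdiff_biUnion_le_alphaNum (hA s)
  -- `s₀` maximises the deficiency `#s - #(N s)`
  obtain ⟨s₀, -, hs₀⟩ := exists_max_image univ (fun s => #s + (#B - #(N s))) univ_nonempty
  have h₀ : #B ≤ #s₀ + (#B - #(N s₀)) := by simpa [N] using hs₀ ∅ (mem_univ _)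
  obtain ⟨T, hT, f, hf, hfN⟩ := exists_injective_of_card_le_card_biUnion_add
    (fun a : A => G.neighborFinset a) (#s₀ - #(N s₀)) fun s => by
      have := hs₀ s (mem_univ _)
      have := hNB s
      have := hNB s₀
      show #s ≤ #(N s) + _
      omega
  have hμ : #T ≤ muNum G := by
    have hadj : ∀ a : T, G.Adj (a : A) (f a) := fun a => (mem_neighborFinset _ _ _).1 (hfN a)
    simpa using le_muNum_of_injective (a := fun a : T => ((a : A) : V)) (b := f)
      (Subtype.val_injective.comp Subtype.val_injective) hf
      (fun a b hab => c.valid (hadj b) (by rw [← hab, a.1.2, b.1.2])) hadj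
  have hV : Nat.card V = Fintype.card A + #B := by
    rw [Nat.card_eq_fintype_card, ← card_univ, Fintype.card_subtype,
      ← card_filter_add_card_filter_not (s := univ) (fun v => c v = true)]
    simp [B]
  have := hα s₀
  have := hNB s₀
  omega

lemma konigEgervary_of_colorable [Finite V] (h : G.Colorable 2) : KonigEgervary G := by
  obtain ⟨c⟩ := h
  exact (alphaNum_add_muNum_le G).antisymm
    (le_alphaNum_add_muNum_of_coloring (G.recolorOfEquiv finTwoEquiv c))

lemma two_mul_alphaNum_le_of_perm [Finite V] (σ : Equiv.Perm V) (hσ : ∀ v, G.Adj v (σ v)) :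
    2 * alphaNum G ≤ Nat.card V := by
  obtain ⟨S, hS, hα⟩ := exists_isIndep_ncard_eq_alphaNum G
  have hσS : Set.MapsTo σ S Sᶜ := fun v hv hσv => hS hv hσv (hσ v).ne (hσ v)
  have := Set.ncard_le_ncard_of_injOn σ hσS σ.injective.injOn
  have := Set.ncard_add_ncard_compl S
  omega

lemma not_konigEgervary_of_perm [Finite V] (hodd : Odd (Nat.card V)) (σ : Equiv.Perm V)
    (hσ : ∀ v, G.Adj v (σ v)) : ¬ KonigEgervary G := by
  have := two_mul_alphaNum_le_of_perm σ hσ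
  have := two_mul_muNum_le G
  obtain ⟨k, hk⟩ := hodd
  unfold KonigEgervary
  omega

lemma exists_perm_adj_of_injective {L : ℕ} {f : Fin L → V} (hf : f.Injective)
    (hadj : ∀ i, G.Adj (f i) (f (finRotate L i))) :
    ∃ σ : Equiv.Perm (Set.range f), ∀ x : Set.range f, G.Adj x (σ x) := by
  let e := Equiv.ofInjective f hf
  refine ⟨e.permCongr (finRotate L), fun x => ?_⟩
  obtain ⟨i, rfl⟩ := e.surjective x
  simpa [Equiv.permCongr_apply, e] using hadj i

lemma Walk.adj_getVert_finRotate {u : V} (w : G.Walk u u) (i : Fin w.length) :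
    G.Adj (w.getVert i) (w.getVert (finRotate w.length i)) := by
  have := w.adj_getVert_succ i.2
  rw [Fin.val_finRotate]
  split_ifs with h
  · rw [getVert_zero]
    rwa [h, getVert_length] at this
  · exact this

lemma Walk.exists_perm_adj_of_odd_length {u : V} (w : G.Walk u u) (hw : Odd w.length) :
    ∃ (X : Set V) (σ : Equiv.Perm X), Odd (Nat.card X) ∧ ∀ x : X, G.Adj x (σ x) := by
  induction hL : w.length using Nat.strong_induction_on generalizing u with
  | _ L ih =>
    by_cases hinj : Set.InjOn w.getVert (Set.Iio w.length)
    · have hf : (fun i : Fin w.length => w.getVert i).Injective := fun i j h =>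
        Fin.ext (hinj i.2 j.2 h)
      obtain ⟨σ, hσ⟩ := exists_perm_adj_of_injective hf w.adj_getVert_finRotate
      refine ⟨_, σ, ?_, hσ⟩
      rwa [Nat.card_range_of_injective hf, Nat.card_eq_fintype_card, Fintype.card_fin]
    obtain ⟨i, j, hij, hjL, heq⟩ : ∃ i j, i < j ∧ j < L ∧ w.getVert i = w.getVert j := by
      simp only [Set.InjOn, not_forall] at hinj
      obtain ⟨a, ha, b, hb, hab, hne⟩ := hinj
      rcases lt_or_gt_of_ne hne with h | h
      exacts [⟨a, b, h, hL ▸ hb, hab⟩, ⟨b, a, h, hL ▸ ha, hab.symm⟩]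
    -- splitting `w` at the repeated vertex gives two shorter closed walks, one of odd length
    let p : G.Walk (w.getVert i) (w.getVert i) :=
      ((w.drop i).take (j - i)).copy rfl (by rw [drop_getVert, Nat.add_sub_cancel' hij.le, heq])
    let q : G.Walk u u := (w.take i).append ((w.drop j).copy heq.symm rfl)
    have hp : p.length = j - i := by
      simp only [p, length_copy, take_length, drop_length]
      omega
    have hq : q.length = i + (L - j) := by
      simp only [q, length_append, take_length, length_copy, drop_length, hL]
      omega
    rcases Nat.even_or_odd p.length with hpe | hpo
    · have hqo : Odd q.length := by
        rw [hL, Nat.odd_iff] at hw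
        rw [hp, Nat.even_iff] at hpe
        rw [hq, Nat.odd_iff]
        omega
      exact ih q.length (by omega) q hqo rfl
    · exact ih p.length (by omega) p hpo rfl

end SimpleGraph

theorem stmt_3 [Fintype V] (G : SimpleGraph V) :
    (∀ X : Set V, KonigEgervary (G.induce X)) ↔ G.Colorable 2 := by
  refine ⟨fun hKE => ?_,
    fun h X => konigEgervary_of_colorable (h.of_hom (Embedding.induce X).toHom)⟩
  by_contra hcol
  obtain ⟨u, w, hw⟩ : ∃ u, ∃ w : G.Walk u u, Odd w.length := by
    simpa [two_colorable_iff_forall_loop_even] using hcol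
  obtain ⟨X, σ, hX, hσ⟩ := w.exists_perm_adj_of_odd_length hw
  exact not_konigEgervary_of_perm (G := G.induce X) hX σ hσ (hKE X)
end

section
/- Let A ⊆ V(G) with ker(G) ⊆ A and let H = G[N[A]] be the subgraph induced on the closed neighborhood of A. Then d(H) ≥ d(G). Moreover, if A is a critical independent set of G, then d(H) = d(G) and ker(H) = ker(G). -/
open SimpleGraph

variable {V : Type*}

/-!
If `A` is a critical independent set, every `X ⊆ N(A)` satisfies the Hall-type inequality
`|X| ≤ |A ∩ N(X)|`, since otherwise `A \ N(X)` would beat `A`. Hence, for any `J ⊆ N[A]`,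
passing from `J` to `J ∩ A` loses the vertices `J ∩ N(A)` but at least as many neighbours
inside `A`, so the difference of `J` in `H = G[N[A]]` is at most `d(J ∩ A) ≤ d(G)`.
Conversely every subset of `A` keeps its whole neighbourhood inside `N[A]`, hence its
difference, so the kernel (which lies in `A`) witnesses `d(H) ≥ d(G)`. The maps
`I ↦ I ∩ A` and `J ↦ J ∩ A` between critical sets of `G` and of `H` then identify the kernels.
-/

section

variable {G : SimpleGraph V}

lemma nbhd_mono {A B : Set V} (h : A ⊆ B) : nbhd G A ⊆ nbhd G B :=
  fun _ ⟨a, ha, hadj⟩ => ⟨a, h ha, hadj⟩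

lemma nbhd_union (A B : Set V) : nbhd G (A ∪ B) = nbhd G A ∪ nbhd G B := by
  ext v
  simp only [nbhd, Set.mem_union, Set.mem_ofPred_eq, or_and_right, exists_or]

lemma IsIndep.mono {s t : Set V} (ht : IsIndep G t) (h : s ⊆ t) : IsIndep G s :=
  Set.Pairwise.mono h ht

lemma IsIndep.disjoint_nbhd {A : Set V} (hA : IsIndep G A) : Disjoint A (nbhd G A) := by
  refine Set.disjoint_left.2 fun v hv ⟨a, ha, hadj⟩ => ?_
  exact hA ha hv (G.ne_of_adj hadj) hadj

lemma isIndep_sdiff_nbhd (S : Set V) : IsIndep G (S \ nbhd G S) :=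
  fun _ ha _ hb _ hadj => hb.2 ⟨_, ha.1, hadj⟩

lemma nbhd_sdiff_nbhd_subset (S T : Set V) : nbhd G (S \ nbhd G T) ⊆ nbhd G S \ T :=
  fun _ ⟨a, ha, hadj⟩ => ⟨⟨a, ha.1, hadj⟩, fun hv => ha.2 ⟨_, hv, hadj.symm⟩⟩

lemma nonempty_diffSet : {d | ∃ I : Set V, IsIndep G I ∧ diffSet G I = d}.Nonempty :=
  ⟨_, ∅, Set.pairwise_empty _, rfl⟩

lemma critDiff_le {d : ℤ} (h : ∀ I, IsIndep G I → diffSet G I ≤ d) : critDiff G ≤ d :=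
  csSup_le nonempty_diffSet fun _ ⟨I, hI, hd⟩ => hd ▸ h I hI

lemma IsCriticalIndep.kerSet_subset {A : Set V} (hA : IsCriticalIndep G A) : kerSet G ⊆ A :=
  Set.sInter_subset_of_mem hA

section Critical

variable [Finite V]

lemma bddAbove_diffSet : BddAbove {d | ∃ I : Set V, IsIndep G I ∧ diffSet G I = d} := by
  refine ⟨Nat.card V, ?_⟩
  rintro _ ⟨I, -, rfl⟩
  have := Set.ncard_le_card I
  simp only [diffSet]
  omega

lemma le_critDiff {I : Set V} (hI : IsIndep G I) : diffSet G I ≤ critDiff G :=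
  le_csSup bddAbove_diffSet ⟨I, hI, rfl⟩

lemma exists_isCriticalIndep : ∃ I, IsCriticalIndep G I := by
  have hfin : {d | ∃ I : Set V, IsIndep G I ∧ diffSet G I = d}.Finite :=
    (Set.finite_range (diffSet G)).subset fun _ ⟨I, _, hd⟩ => ⟨I, hd⟩
  obtain ⟨I, hI, hd⟩ := nonempty_diffSet.csSup_mem hfin
  exact ⟨I, hI, hd⟩

/-- `S \ N(S)` is independent and its difference is at least that of `S`. -/
lemma diffSet_le_critDiff (S : Set V) : diffSet G S ≤ critDiff G := by
  refine le_trans ?_ (le_critDiff (isIndep_sdiff_nbhd S))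
  have hS := Set.ncard_inter_add_ncard_sdiff_eq_ncard S (nbhd G S)
  have hN := Set.ncard_inter_add_ncard_sdiff_eq_ncard (nbhd G S) S
  have hsub := Set.ncard_le_ncard (nbhd_sdiff_nbhd_subset (G := G) S S)
  rw [Set.inter_comm] at hN
  simp only [diffSet]
  omega

lemma diffSet_add_diffSet_le (I J : Set V) :
    diffSet G I + diffSet G J ≤ diffSet G (I ∪ J) + diffSet G (I ∩ J) := by
  have hV := Set.ncard_union_add_ncard_inter I J
  have hN := Set.ncard_union_add_ncard_inter (nbhd G I) (nbhd G J)
  have hsub := Set.ncard_le_ncard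
    (Set.subset_inter (nbhd_mono (G := G) (Set.inter_subset_left (s := I) (t := J)))
      (nbhd_mono Set.inter_subset_right))
  simp only [diffSet, nbhd_union]
  omega

lemma IsCriticalIndep.inter {I J : Set V} (hI : IsCriticalIndep G I) (hJ : IsCriticalIndep G J) :
    IsCriticalIndep G (I ∩ J) := by
  have hind := hI.1.mono (Set.inter_subset_left : I ∩ J ⊆ I)
  refine ⟨hind, le_antisymm (le_critDiff hind) ?_⟩
  have := diffSet_add_diffSet_le (G := G) I J
  have := diffSet_le_critDiff (G := G) (I ∪ J)
  rw [hI.2, hJ.2] at *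
  omega

lemma isCriticalIndep_kerSet : IsCriticalIndep G (kerSet G) := by
  obtain ⟨I, hI⟩ := exists_minimal_of_wellFoundedLT (IsCriticalIndep G) exists_isCriticalIndep
  suffices kerSet G = I from this ▸ hI.prop
  refine (Set.sInter_subset_of_mem hI.prop).antisymm fun v hv J hJ => ?_
  exact (hI.le_of_le (hI.prop.inter hJ) Set.inter_subset_left hv).2

lemma ncard_le_ncard_inter_nbhd {A X : Set V} (hA : critDiff G ≤ diffSet G A)
    (hX : X ⊆ nbhd G A) : X.ncard ≤ (A ∩ nbhd G X).ncard := by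
  have hK := (diffSet_le_critDiff (G := G) (A \ nbhd G X)).trans hA
  have hA' := Set.ncard_inter_add_ncard_sdiff_eq_ncard A (nbhd G X)
  have hN := Set.ncard_sdiff_add_ncard_of_subset hX
  have hsub := Set.ncard_le_ncard (nbhd_sdiff_nbhd_subset (G := G) A X)
  simp only [diffSet] at hK
  omega

lemma ncard_sub_ncard_nbhd_inter_le {A J : Set V} (hA : IsCriticalIndep G A)
    (hJ : J ⊆ A ∪ nbhd G A) :
    (J.ncard : ℤ) - (nbhd G J ∩ (A ∪ nbhd G A)).ncard ≤ diffSet G (J ∩ A) := by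
  have hJ_le : J.ncard ≤ (J ∩ A).ncard + (J ∩ nbhd G A).ncard :=
    (Set.ncard_le_ncard fun v hv => (hJ hv).imp (⟨hv, ·⟩) (⟨hv, ·⟩)).trans
      (Set.ncard_union_le _ _)
  have hHall := ncard_le_ncard_inter_nbhd hA.2.ge (Set.inter_subset_right (s := J))
  have hdisj : Disjoint (A ∩ nbhd G (J ∩ nbhd G A)) (nbhd G (J ∩ A)) :=
    hA.1.disjoint_nbhd.mono Set.inter_subset_left (nbhd_mono Set.inter_subset_right)
  have hN_ge : (A ∩ nbhd G (J ∩ nbhd G A)).ncard + (nbhd G (J ∩ A)).ncard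
      ≤ (nbhd G J ∩ (A ∪ nbhd G A)).ncard := by
    rw [← Set.ncard_union_eq hdisj]
    refine Set.ncard_le_ncard (Set.union_subset ?_ ?_)
    · exact fun v hv => ⟨nbhd_mono Set.inter_subset_left hv.2, Or.inl hv.1⟩
    · exact fun v hv => ⟨nbhd_mono Set.inter_subset_left hv,
        Or.inr (nbhd_mono Set.inter_subset_right hv)⟩
  simp only [diffSet]
  omega

end Critical

section Induce

variable {s : Set V}

lemma image_nbhd_induce (J : Set s) :
    Subtype.val '' nbhd (G.induce s) J = nbhd G (Subtype.val '' J) ∩ s := by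
  ext v
  constructor
  · rintro ⟨v, ⟨a, ha, hadj⟩, rfl⟩
    exact ⟨⟨a, ⟨a, ha, rfl⟩, hadj⟩, v.2⟩
  · rintro ⟨⟨_, ⟨a, ha, rfl⟩, hadj⟩, hv⟩
    exact ⟨⟨v, hv⟩, ⟨a, ha, hadj⟩, rfl⟩

lemma diffSet_induce (J : Set s) :
    diffSet (G.induce s) J
      = ((Subtype.val '' J).ncard : ℤ) - (nbhd G (Subtype.val '' J) ∩ s).ncard := by
  rw [diffSet, ← image_nbhd_induce, Set.ncard_image_of_injective _ Subtype.val_injective,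
    Set.ncard_image_of_injective _ Subtype.val_injective]

lemma IsIndep.preimage_val {I : Set V} (hI : IsIndep G I) :
    IsIndep (G.induce s) (Subtype.val ⁻¹' I) :=
  fun _ ha _ hb hne => hI ha hb (Subtype.val_injective.ne hne)

lemma diffSet_induce_preimage_val {I : Set V} (hI : I ⊆ s) (hN : nbhd G I ⊆ s) :
    diffSet (G.induce s) (Subtype.val ⁻¹' I) = diffSet G I := by
  rw [diffSet_induce, Subtype.image_preimage_coe, Set.inter_eq_right.2 hI,
    Set.inter_eq_left.2 hN, diffSet]

lemma diffSet_induce_preimage_val_of_subset {A I : Set V} (hIA : I ⊆ A) :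
    diffSet (G.induce (A ∪ nbhd G A)) (Subtype.val ⁻¹' I) = diffSet G I :=
  diffSet_induce_preimage_val (hIA.trans Set.subset_union_left)
    ((nbhd_mono hIA).trans Set.subset_union_right)

end Induce

section ClosedNbhd

variable [Finite V] {A : Set V}

lemma critDiff_le_critDiff_induce (hker : kerSet G ⊆ A) :
    critDiff G ≤ critDiff (G.induce (A ∪ nbhd G A)) := by
  have hK := isCriticalIndep_kerSet (G := G)
  calc critDiff G = diffSet G (kerSet G) := hK.2.symm
    _ = diffSet (G.induce (A ∪ nbhd G A)) (Subtype.val ⁻¹' kerSet G) :=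
      (diffSet_induce_preimage_val_of_subset hker).symm
    _ ≤ _ := le_critDiff hK.1.preimage_val

variable (hA : IsCriticalIndep G A)
include hA

lemma diffSet_induce_le_diffSet_inter (J : Set ↥(A ∪ nbhd G A)) :
    diffSet (G.induce (A ∪ nbhd G A)) J ≤ diffSet G (Subtype.val '' J ∩ A) := by
  rw [diffSet_induce]
  exact ncard_sub_ncard_nbhd_inter_le hA (Subtype.coe_image_subset _ J)

lemma critDiff_induce_eq : critDiff (G.induce (A ∪ nbhd G A)) = critDiff G := by
  refine le_antisymm (critDiff_le fun J _ => ?_) (critDiff_le_critDiff_induce hA.kerSet_subset)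
  exact (diffSet_induce_le_diffSet_inter hA J).trans
    (le_critDiff (hA.1.mono Set.inter_subset_right))

lemma isCriticalIndep_induce_preimage_val_inter {I : Set V} (hI : IsCriticalIndep G I) :
    IsCriticalIndep (G.induce (A ∪ nbhd G A)) (Subtype.val ⁻¹' (I ∩ A)) := by
  have hIA := hI.inter hA
  refine ⟨hIA.1.preimage_val, ?_⟩
  rw [diffSet_induce_preimage_val_of_subset Set.inter_subset_right, hIA.2, critDiff_induce_eq hA]

lemma isCriticalIndep_image_val_inter {J : Set ↥(A ∪ nbhd G A)}
    (hJ : IsCriticalIndep (G.induce (A ∪ nbhd G A)) J) :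
    IsCriticalIndep G (Subtype.val '' J ∩ A) := by
  have hind := hA.1.mono (Set.inter_subset_right : Subtype.val '' J ∩ A ⊆ A)
  refine ⟨hind, (le_critDiff hind).antisymm ?_⟩
  rw [← critDiff_induce_eq hA, ← hJ.2]
  exact diffSet_induce_le_diffSet_inter hA J

lemma image_val_kerSet_induce :
    Subtype.val '' kerSet (G.induce (A ∪ nbhd G A)) = kerSet G := by
  refine Set.Subset.antisymm ?_ fun v hv => ?_
  · rintro _ ⟨v, hv, rfl⟩ I hI
    exact (hv _ (isCriticalIndep_induce_preimage_val_inter hA hI)).1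
  · refine ⟨⟨v, Or.inl (hA.kerSet_subset hv)⟩, fun J hJ => ?_, rfl⟩
    obtain ⟨w, hw, rfl⟩ :=
      (Set.sInter_subset_of_mem (isCriticalIndep_image_val_inter hA hJ) hv).1
    exact hw

end ClosedNbhd

end

theorem stmt_10 [Fintype V] (G : SimpleGraph V) (A : Set V)
    (hker : kerSet G ⊆ A) :
    critDiff G ≤ critDiff (G.induce (A ∪ nbhd G A)) ∧
    (IsCriticalIndep G A →
      critDiff (G.induce (A ∪ nbhd G A)) = critDiff G ∧
      Subtype.val '' kerSet (G.induce (A ∪ nbhd G A)) = kerSet G) :=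
  ⟨critDiff_le_critDiff_induce hker, fun hA =>
    ⟨critDiff_induce_eq hA, image_val_kerSet_induce hA⟩⟩
end
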